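/- arXiv:1207.6628 — 8 statements merged into one kernel-verified Lean document; each statement's English description precedes it below -/
import Mathlib

section
/- Let G : ℝⁿ ⇉ ℝᵐ be a set-valued mapping and let (x̄,v̄) ∈ gph G. Then the following are equivalent: (1) M is a locally minimal identifiable set at x̄ for v̄; (2) there exists a neighborhood V of v̄ such that for every subneighborhood W ⊂ V of v̄, the representation M = G⁻¹(W) holds locally around x̄; (3) M is a locally maximal necessary set at x̄ for v̄; (4) M is both identifiable and necessary at x̄ for v̄. -/
open Filter Topology Metric Set
open scoped RealInnerProductSpace

noncomputable section

/-- `ℝⁿ` with the Euclidean structure. -/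
abbrev Euc (n : ℕ) : Type := EuclideanSpace ℝ (Fin n)

section Defs

variable {H : Type*} [NormedAddCommGroup H] [InnerProductSpace ℝ H]
variable {H' : Type*} [NormedAddCommGroup H'] [InnerProductSpace ℝ H']

/-- The inclusion `M ⊆ Q` holds locally around the point `x`. -/
def LocallyIncl {α : Type*} [TopologicalSpace α] (M Q : Set α) (x : α) : Prop :=
  ∃ U ∈ 𝓝 x, M ∩ U ⊆ Q ∩ U

/-- The equality `M = Q` holds locally around the point `x`. -/
def LocallyEq {α : Type*} [TopologicalSpace α] (M Q : Set α) (x : α) : Prop :=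
  ∃ U ∈ 𝓝 x, M ∩ U = Q ∩ U

/-- The graph of a set-valued mapping. -/
def svGraph (G : H → Set H') : Set (H × H') := {p | p.2 ∈ G p.1}

/-- `G⁻¹(W)`, the preimage of a set `W` under the set-valued mapping `G`. -/
def svPreimage (G : H → Set H') (W : Set H') : Set H := {x | (G x ∩ W).Nonempty}

/-- `M` is identifiable relative to the set-valued mapping `G` at `x` for `v ∈ G x`:
the inclusion `gph G ⊆ M × H'` holds locally around `(x, v)`. -/
def IdentifiableRel (G : H → Set H') (M : Set H) (x : H) (v : H') : Prop :=
  LocallyIncl (svGraph G) (M ×ˢ (univ : Set H')) (x, v)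

/-- `M` is necessary relative to `G` at `x` for `v ∈ G x`: `x ∈ M` and the function
`y ↦ d(v, G y)`, restricted to `M`, is continuous at `x`. -/
def NecessaryRel (G : H → Set H') (M : Set H) (x : H) (v : H') : Prop :=
  x ∈ M ∧ ContinuousWithinAt (fun y => EMetric.infEdist v (G y)) M x

/-- `M` is a locally minimal identifiable set relative to `G` at `x` for `v`. -/
def LocallyMinimalIdentifiableRel (G : H → Set H') (M : Set H) (x : H) (v : H') : Prop :=
  IdentifiableRel G M x v ∧ ∀ M' : Set H, IdentifiableRel G M' x v → LocallyIncl M M' x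

/-- `M` is a locally maximal necessary set relative to `G` at `x` for `v`. -/
def LocallyMaximalNecessaryRel (G : H → Set H') (M : Set H) (x : H) (v : H') : Prop :=
  NecessaryRel G M x v ∧ ∀ M' : Set H, NecessaryRel G M' x v → LocallyIncl M' M x

/-- The proximal normal cone to `Q` at `x`. -/
def proxNormalCone (Q : Set H) (x : H) : Set H :=
  {v | x ∈ Q ∧ ∃ r > (0:ℝ), ∀ y ∈ Q, dist (x + r⁻¹ • v) x ≤ dist (x + r⁻¹ • v) y}

/-- The Fréchet normal cone to `Q` at `x`. -/
def frechetNormalCone (Q : Set H) (x : H) : Set H :=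
  {v | x ∈ Q ∧ ∀ ε > (0:ℝ), ∃ δ > (0:ℝ), ∀ y ∈ Q, dist y x < δ → ⟪v, y - x⟫ ≤ ε * ‖y - x‖}

/-- The limiting normal cone to `Q` at `x`. -/
def limitingNormalCone (Q : Set H) (x : H) : Set H :=
  {v | ∃ xs vs : ℕ → H, (∀ i, vs i ∈ frechetNormalCone Q (xs i)) ∧
        Tendsto xs atTop (𝓝 x) ∧ Tendsto vs atTop (𝓝 v)}

/-- `Q` is locally closed at `x`. -/
def LocallyClosedAt (Q : Set H) (x : H) : Prop :=
  ∃ ε > (0:ℝ), IsClosed (Q ∩ closedBall x ε)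

/-- `x` is the unique nearest point of `S` to `p`. -/
def IsUniqueNearestPt (S : Set H) (p x : H) : Prop :=
  x ∈ S ∧ ∀ y ∈ S, y ≠ x → dist p x < dist p y

/-- `Q` is prox-regular at `xb` for `vb`. -/
def ProxRegularAt (Q : Set H) (xb vb : H) : Prop :=
  LocallyClosedAt Q xb ∧ ∃ ε > (0:ℝ), ∃ r > (0:ℝ), ∀ x ∈ Q,
    ∀ v ∈ limitingNormalCone Q x, dist x xb < ε → dist v vb < ε →
      IsUniqueNearestPt (Q ∩ closedBall xb ε) (x + r⁻¹ • v) x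

/-- `Q` is Clarke regular at `x`. -/
def ClarkeRegularAt (Q : Set H) (x : H) : Prop :=
  LocallyClosedAt Q x ∧ limitingNormalCone Q x = frechetNormalCone Q x

/-- `M` is identifiable relative to the set `Q` at `xb` for `vb ∈ N_Q(xb)`:
the graph of the limiting normal cone mapping is contained in `M × H` locally
around `(xb, vb)`. -/
def IdentifiableIn (Q M : Set H) (xb vb : H) : Prop :=
  ∃ W ∈ 𝓝 (xb, vb), ∀ p : H × H, p ∈ W → p.1 ∈ Q → p.2 ∈ limitingNormalCone Q p.1 → p.1 ∈ M

/-- `M` is a locally minimal identifiable set relative to the set `Q` at `xb` for `vb`. -/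
def LocallyMinimalIdentifiableIn (Q M : Set H) (xb vb : H) : Prop :=
  IdentifiableIn Q M xb vb ∧ ∀ M' : Set H, IdentifiableIn Q M' xb vb → LocallyIncl M M' xb

/-- The (Bouligand) tangent cone to `Q` at `xb`. -/
def tangentConeB (Q : Set H) (xb : H) : Set H :=
  {w | ∃ (xs : ℕ → H) (ts : ℕ → ℝ), (∀ i, xs i ∈ Q) ∧ (∀ i, 0 < ts i) ∧
      Tendsto ts atTop (𝓝 0) ∧ Tendsto xs atTop (𝓝 xb) ∧
      Tendsto (fun i => (ts i)⁻¹ • (xs i - xb)) atTop (𝓝 w)}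

/-- The set of nearest points of `Q` to `y`. -/
def nearestPts (Q : Set H) (y : H) : Set H := {z | z ∈ Q ∧ ∀ w ∈ Q, dist y z ≤ dist y w}

/-- A tangent vector `w ∈ T_Q(xb)` is smoothly derivable. -/
def SmoothlyDerivableVec (Q : Set H) (xb w : H) : Prop :=
  ∃ ε > (0:ℝ), ∃ γ : ℝ → H, ContDiffOn ℝ 1 γ (Ico (0:ℝ) ε) ∧ γ 0 = xb ∧
    (∀ t ∈ Ico (0:ℝ) ε, γ t ∈ Q) ∧
    Tendsto (fun t => t⁻¹ • (γ t - xb)) (𝓝[>] (0:ℝ)) (𝓝 w)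

/-- `Q` is smoothly derivable at `xb`: every tangent vector is smoothly derivable. -/
def SmoothlyDerivableAt (Q : Set H) (xb : H) : Prop :=
  ∀ w ∈ tangentConeB Q xb, SmoothlyDerivableVec Q xb w

/-- The normal cone of convex analysis. -/
def convNormalCone (C : Set H) (x : H) : Set H := {v | ∀ y ∈ C, ⟪v, y - x⟫ ≤ 0}

/-- The tangent cone of convex analysis. -/
def convTangentCone (C : Set H) (x : H) : Set H :=
  closure {w | ∃ l : ℝ, 0 ≤ l ∧ ∃ y ∈ C, w = l • (y - x)}

/-- A convex polyhedron: a finite intersection of closed halfspaces. -/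
def IsPolyhedron (Q : Set H) : Prop :=
  ∃ (k : ℕ) (a : Fin k → H) (b : Fin k → ℝ), Q = {x | ∀ i, ⟪a i, x⟫ ≤ b i}

/-- The relative interior of a set: interior relative to its affine span. -/
def relInterior (S : Set H) : Set H :=
  {v | v ∈ S ∧ ∃ ε > (0:ℝ), ∀ y ∈ (affineSpan ℝ S : Set H), dist y v < ε → y ∈ S}

/-- Inner semicontinuity at `xb` of a set-valued map restricted to `S`. -/
def InnerSemicontinuousOnAt (T : H → Set H') (S : Set H) (xb : H) : Prop :=
  ∀ xs : ℕ → H, (∀ i, xs i ∈ S) → Tendsto xs atTop (𝓝 xb) →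
    ∀ w ∈ T xb, ∃ ws : ℕ → H', (∀ i, ws i ∈ T (xs i)) ∧ Tendsto ws atTop (𝓝 w)

/-- `M` is a `C²` submanifold of the ambient space around the point `xb`. -/
def IsC2SubmanifoldAround (M : Set H) (xb : H) : Prop :=
  ∃ (m : ℕ) (F : H → EuclideanSpace ℝ (Fin m)) (U : Set H), IsOpen U ∧ xb ∈ U ∧
    ContDiffOn ℝ 2 F U ∧ Function.Surjective (fderiv ℝ F xb) ∧
    M ∩ U = {x ∈ U | F x = 0}

/-- `Q` is partly smooth with respect to the manifold `M` at `xb` for `vb`. -/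
def PartlySmoothAt (Q M : Set H) (xb vb : H) : Prop :=
  ProxRegularAt Q xb vb ∧
  (Submodule.span ℝ (frechetNormalCone Q xb) : Set H) = limitingNormalCone M xb ∧
  ∃ V ∈ 𝓝 vb, InnerSemicontinuousOnAt (fun x => V ∩ limitingNormalCone Q x) M xb

/-- `ℝⁿ × ℝ` with the Euclidean (ℓ²) structure, hosting epigraphs. -/
abbrev PairL2 (H : Type*) [NormedAddCommGroup H] : Type _ := WithLp 2 (H × ℝ)

/-- Build a point of `PairL2 H` from its components. -/
def pmk (x : H) (r : ℝ) : PairL2 H := (WithLp.equiv 2 (H × ℝ)).symm (x, r)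

/-- The epigraph of an extended-real-valued function. -/
def epigraph (f : H → EReal) : Set (PairL2 H) :=
  {p | f ((WithLp.equiv 2 (H × ℝ)) p).1 ≤ (((WithLp.equiv 2 (H × ℝ)) p).2 : EReal)}

/-- The limiting subdifferential. -/
def limSubdiff (f : H → EReal) (x : H) : Set H :=
  {v | ∃ r : ℝ, f x = (r : EReal) ∧
      pmk v (-1) ∈ limitingNormalCone (epigraph f) (pmk x r)}

/-- The horizon subdifferential. -/
def horizonSubdiff (f : H → EReal) (x : H) : Set H :=
  {v | ∃ r : ℝ, f x = (r : EReal) ∧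
      pmk v 0 ∈ limitingNormalCone (epigraph f) (pmk x r)}

/-- The proximal subdifferential. -/
def proxSubdiff (f : H → EReal) (x : H) : Set H :=
  {v | ∃ r : ℝ, f x = (r : EReal) ∧
      pmk v (-1) ∈ proxNormalCone (epigraph f) (pmk x r)}

/-- A function is Clarke regular at `x` if its epigraph is Clarke regular at `(x, f x)`. -/
def ClarkeRegularFn (f : H → EReal) (x : H) : Prop :=
  ∃ r : ℝ, f x = (r : EReal) ∧ ClarkeRegularAt (epigraph f) (pmk x r)

/-- `M` is identifiable at `xb` for `vb` relative to the function `f` with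
subdifferential mapping `D`: for every sequence `(xᵢ, f xᵢ, vᵢ) → (xb, f xb, vb)`
with `vᵢ ∈ D xᵢ`, the points `xᵢ` lie in `M` for all large `i`. -/
def IdentifiableFn (f : H → EReal) (D : H → Set H) (M : Set H) (xb vb : H) : Prop :=
  ∀ xs vs : ℕ → H, Tendsto xs atTop (𝓝 xb) →
    Tendsto (fun i => f (xs i)) atTop (𝓝 (f xb)) →
    Tendsto vs atTop (𝓝 vb) → (∀ i, vs i ∈ D (xs i)) →
    ∀ᶠ i in atTop, xs i ∈ M

/-- `M` is a locally minimal identifiable set relative to `f` (with subdifferential `D`). -/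
def LocallyMinimalIdentifiableFn (f : H → EReal) (D : H → Set H) (M : Set H)
    (xb vb : H) : Prop :=
  IdentifiableFn f D M xb vb ∧ ∀ M' : Set H, IdentifiableFn f D M' xb vb → LocallyIncl M M' xb

/-- The subdifferential of convex analysis for an extended-real-valued function. -/
def convexSubdiff (f : H → EReal) (x : H) : Set H :=
  {v | ∃ r : ℝ, f x = (r : EReal) ∧ ∀ y : H, ((r + ⟪v, y - x⟫ : ℝ) : EReal) ≤ f y}

/-- Convexity for an extended-real-valued function. -/
def ERealConvexOn (f : H → EReal) : Prop :=
  ∀ x y : H, ∀ a b : ℝ, 0 ≤ a → 0 ≤ b → a + b = 1 →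
    f (a • x + b • y) ≤ (a : EReal) * f x + (b : EReal) * f y

/-- A piecewise linear-quadratic function: its domain is the union of finitely many
convex polyhedra, on each of which it agrees with a polynomial of degree at most 2. -/
def IsPiecewiseLinearQuadratic (f : H → EReal) : Prop :=
  ∃ (k : ℕ) (C : Fin k → Set H), (∀ i, IsPolyhedron (C i)) ∧
    ({x | f x ≠ ⊤} = ⋃ i, C i) ∧
    ∀ i, ∃ (B : H →ₗ[ℝ] H →ₗ[ℝ] ℝ) (l : H →ₗ[ℝ] ℝ) (c : ℝ),
      ∀ x ∈ C i, f x = ((B x x + l x + c : ℝ) : EReal)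


/-- Outer semicontinuity of a set-valued mapping (at every point). -/
def OuterSemicontinuousSV (G : H → Set H') : Prop :=
  ∀ (x : H) (v : H') (xs : ℕ → H) (vs : ℕ → H'),
    Tendsto xs atTop (𝓝 x) → Tendsto vs atTop (𝓝 v) →
    (∀ i, vs i ∈ G (xs i)) → v ∈ G x

end Defs

/-- characterization of locally minimal identifiable sets. -/
theorem statement1 {n m : ℕ} (G : Euc n → Set (Euc m)) (xb : Euc n) (vb : Euc m)
    (hvb : vb ∈ G xb) (M : Set (Euc n)) :
    List.TFAE
      [LocallyMinimalIdentifiableRel G M xb vb,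
       ∃ V ∈ 𝓝 vb, ∀ W ⊆ V, W ∈ 𝓝 vb → LocallyEq M (svPreimage G W) xb,
       LocallyMaximalNecessaryRel G M xb vb,
       IdentifiableRel G M xb vb ∧ NecessaryRel G M xb vb] := by
  have h0 : EMetric.infEdist vb (G xb) = 0 := EMetric.infEdist_zero_of_mem hvb
  tfae_have 1 → 2 := by
    rintro ⟨⟨U₀, hU₀, hsub⟩, hmin⟩
    obtain ⟨A, hA, B, hB, hAB⟩ := mem_nhds_prod_iff.mp hU₀
    refine ⟨B, hB, fun W hWB hW => ?_⟩
    have hid : IdentifiableRel G (svPreimage G W) xb vb := by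
      refine ⟨univ ×ˢ W, prod_mem_nhds univ_mem hW, ?_⟩
      rintro ⟨x, v⟩ ⟨hg, hU⟩
      exact ⟨⟨⟨v, hg, hU.2⟩, trivial⟩, hU⟩
    obtain ⟨U₁, hU₁, hMW⟩ := hmin (svPreimage G W) hid
    refine ⟨A ∩ U₁, inter_mem hA hU₁, ?_⟩
    ext y
    simp only [mem_inter_iff]
    constructor
    · rintro ⟨hyM, hyA, hyU₁⟩
      exact ⟨(hMW ⟨hyM, hyU₁⟩).1, hyA, hyU₁⟩
    · rintro ⟨⟨v, hvG, hvW⟩, hyA, hyU₁⟩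
      have : (y, v) ∈ M ×ˢ (univ : Set (Euc m)) ∩ U₀ := hsub ⟨hvG, hAB ⟨hyA, hWB hvW⟩⟩
      exact ⟨this.1.1, hyA, hyU₁⟩
  tfae_have 2 → 4 := by
    rintro ⟨V, hV, h⟩
    obtain ⟨U, hU, hMV⟩ := h V Subset.rfl hV
    have hxbU : xb ∈ U := mem_of_mem_nhds hU
    have hxbM : xb ∈ M := by
      have hx : xb ∈ svPreimage G V ∩ U := ⟨⟨vb, hvb, mem_of_mem_nhds hV⟩, hxbU⟩
      rw [← hMV] at hx
      exact hx.1
    refine ⟨⟨U ×ˢ V, prod_mem_nhds hU hV, ?_⟩, hxbM, ?_⟩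
    · rintro ⟨x, v⟩ ⟨hg, hxU, hvV⟩
      have hx : x ∈ svPreimage G V ∩ U := ⟨⟨v, hg, hvV⟩, hxU⟩
      rw [← hMV] at hx
      exact ⟨⟨hx.1, trivial⟩, hxU, hvV⟩
    · rw [ContinuousWithinAt, h0, ENNReal.tendsto_nhds_zero]
      intro ε hε
      obtain ⟨U', hU', hMW⟩ := h (V ∩ EMetric.ball vb ε) inter_subset_left
        (inter_mem hV (EMetric.ball_mem_nhds vb hε))
      filter_upwards [nhdsWithin_le_nhds hU', self_mem_nhdsWithin] with y hyU' hyM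
      have hy : y ∈ svPreimage G (V ∩ EMetric.ball vb ε) ∩ U' := by
        rw [← hMW]; exact ⟨hyM, hyU'⟩
      obtain ⟨⟨v, hvG, _, hvball⟩, _⟩ := hy
      calc EMetric.infEdist vb (G y) ≤ edist vb v := EMetric.infEdist_le_edist_of_mem hvG
        _ ≤ ε := by rw [edist_comm]; exact le_of_lt hvball
  tfae_have 4 → 1 := by
    rintro ⟨hid, hxbM, hcont⟩
    refine ⟨hid, fun M' hid' => ?_⟩
    obtain ⟨U', hU', hsub'⟩ := hid'
    obtain ⟨A, hA, B, hB, hAB⟩ := mem_nhds_prod_iff.mp hU'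
    obtain ⟨ε, hε, hball⟩ := EMetric.mem_nhds_iff.mp hB
    have htend : Tendsto (fun y => EMetric.infEdist vb (G y)) (𝓝[M] xb) (𝓝 0) := by
      rw [← h0]; exact hcont
    have hev : ∀ᶠ y in 𝓝[M] xb, y ∈ M' := by
      filter_upwards [htend.eventually_lt_const hε, nhdsWithin_le_nhds hA] with y h1 h2
      obtain ⟨v, hvG, hvd⟩ := EMetric.infEdist_lt_iff.mp h1
      have : (y, v) ∈ M' ×ˢ (univ : Set (Euc m)) ∩ U' :=
        hsub' ⟨hvG, hAB ⟨h2, hball (by rw [EMetric.mem_ball, edist_comm]; exact hvd)⟩⟩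
      exact this.1.1
    obtain ⟨u, huo, hxu, husub⟩ := mem_nhdsWithin.mp hev
    exact ⟨u, huo.mem_nhds hxu, fun y hy => ⟨husub ⟨hy.2, hy.1⟩, hy.2⟩⟩
  tfae_have 4 → 3 := by
    rintro ⟨⟨U₀, hU₀, hsub⟩, hnec⟩
    refine ⟨hnec, fun M' hnec' => ?_⟩
    obtain ⟨hxbM', hcont'⟩ := hnec'
    obtain ⟨A, hA, B, hB, hAB⟩ := mem_nhds_prod_iff.mp hU₀
    obtain ⟨ε, hε, hball⟩ := EMetric.mem_nhds_iff.mp hB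
    have htend : Tendsto (fun y => EMetric.infEdist vb (G y)) (𝓝[M'] xb) (𝓝 0) := by
      rw [← h0]; exact hcont'
    have hev : ∀ᶠ y in 𝓝[M'] xb, y ∈ M := by
      filter_upwards [htend.eventually_lt_const hε, nhdsWithin_le_nhds hA] with y h1 h2
      obtain ⟨v, hvG, hvd⟩ := EMetric.infEdist_lt_iff.mp h1
      have : (y, v) ∈ M ×ˢ (univ : Set (Euc m)) ∩ U₀ :=
        hsub ⟨hvG, hAB ⟨h2, hball (by rw [EMetric.mem_ball, edist_comm]; exact hvd)⟩⟩
      exact this.1.1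
    obtain ⟨u, huo, hxu, husub⟩ := mem_nhdsWithin.mp hev
    exact ⟨u, huo.mem_nhds hxu, fun y hy => ⟨husub ⟨hy.2, hy.1⟩, hy.2⟩⟩
  tfae_have 3 → 4 := by
    rintro ⟨⟨hxbM, hcont⟩, hmax⟩
    refine ⟨?_, hxbM, hcont⟩
    by_contra hni
    have Bad : ∀ r : ℝ, 0 < r → ∃ p : Euc n × Euc m,
        p.2 ∈ G p.1 ∧ dist p.1 xb < r ∧ dist p.2 vb < r ∧ p.1 ∉ M := by
      intro r hr
      by_contra hc
      push_neg at hc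
      refine hni ⟨ball xb r ×ˢ ball vb r,
        prod_mem_nhds (ball_mem_nhds _ hr) (ball_mem_nhds _ hr), ?_⟩
      rintro ⟨x, v⟩ ⟨hg, hx, hv⟩
      exact ⟨⟨hc (x, v) hg (mem_ball.mp hx) (mem_ball.mp hv), trivial⟩, hx, hv⟩
    choose pt hG hdx hdv hMp using Bad
    set step : {r : ℝ // 0 < r} → {r : ℝ // 0 < r} := fun r =>
      ⟨dist (pt r.1 r.2).1 xb / 2, half_pos (dist_pos.mpr (fun he => hMp r.1 r.2 (he ▸ hxbM)))⟩
      with hstepdef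
    set rs : ℕ → {r : ℝ // 0 < r} := fun i => step^[i] ⟨1, one_pos⟩ with hrsdef
    set xs : ℕ → Euc n := fun i => (pt (rs i).1 (rs i).2).1 with hxsdef
    set vs : ℕ → Euc m := fun i => (pt (rs i).1 (rs i).2).2 with hvsdef
    have hrsucc : ∀ i, (rs (i + 1)).1 = dist (xs i) xb / 2 := by
      intro i
      have : rs (i + 1) = step (rs i) := Function.iterate_succ_apply' step i _
      rw [this]
    have hx : ∀ i, dist (xs i) xb < (rs i).1 := fun i => hdx _ _
    have hv : ∀ i, dist (vs i) vb < (rs i).1 := fun i => hdv _ _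
    have hGv : ∀ i, vs i ∈ G (xs i) := fun i => hG _ _
    have hxM : ∀ i, xs i ∉ M := fun i => hMp _ _
    have hlt : ∀ i, (rs (i + 1)).1 < (rs i).1 := by
      intro i
      rw [hrsucc i]
      have := hx i
      have := (rs i).2
      linarith
    have hanti : Antitone fun i => (rs i).1 := antitone_nat_of_succ_le fun i => (hlt i).le
    have hrpow : ∀ i, (rs i).1 ≤ (1 / 2 : ℝ) ^ i := by
      intro i
      induction i with
      | zero => simp [hrsdef]
      | succ k ih =>
        have h1 := hrsucc k
        have h2 := hx k
        have : (rs (k + 1)).1 < (rs k).1 / 2 := by rw [h1]; linarith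
        calc (rs (k + 1)).1 ≤ (rs k).1 / 2 := this.le
          _ ≤ (1 / 2 : ℝ) ^ k / 2 := by linarith
          _ = (1 / 2 : ℝ) ^ (k + 1) := by ring
    have hdanti : Antitone fun i => dist (xs i) xb := by
      refine antitone_nat_of_succ_le fun i => ?_
      have h1 := hx (i + 1)
      have h2 := hrsucc i
      have h3 := dist_nonneg (x := xs i) (y := xb)
      linarith
    -- continuity within S := range xs
    have hScont : Tendsto (fun y => EMetric.infEdist vb (G y)) (𝓝[range xs] xb) (𝓝 0) := by
      rw [ENNReal.tendsto_nhds_zero]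
      intro ε hε
      obtain ⟨ε', hε', hle⟩ : ∃ ε' : ℝ, 0 < ε' ∧ ENNReal.ofReal ε' ≤ ε := by
        rcases eq_or_ne ε ⊤ with h | h
        · exact ⟨1, one_pos, h ▸ le_top⟩
        · exact ⟨ε.toReal, ENNReal.toReal_pos hε.ne' h, by rw [ENNReal.ofReal_toReal h]⟩
      obtain ⟨i, hi⟩ := exists_pow_lt_of_lt_one hε' (by norm_num : (1 / 2 : ℝ) < 1)
      have hri : (rs i).1 < ε' := lt_of_le_of_lt (hrpow i) hi
      rw [eventually_iff, Metric.mem_nhdsWithin_iff]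
      refine ⟨(rs (i + 1)).1, (rs (i + 1)).2, ?_⟩
      rintro y ⟨hyb, j, rfl⟩
      have hyb' : dist (xs j) xb < (rs (i + 1)).1 := mem_ball.mp hyb
      have hij : i < j := by
        by_contra hle'
        push_neg at hle'
        have := hdanti hle'
        simp only at this
        have h2 := hrsucc i
        have h3 := (rs (i + 1)).2
        linarith
      have hrj : (rs j).1 ≤ (rs (i + 1)).1 := hanti hij
      have : dist (vs j) vb < ε' := by
        have := hv j
        have := hlt i
        linarith
      calc EMetric.infEdist vb (G (xs j)) ≤ edist vb (vs j) :=
            EMetric.infEdist_le_edist_of_mem (hGv j)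
        _ = ENNReal.ofReal (dist vb (vs j)) := edist_dist _ _
        _ ≤ ENNReal.ofReal ε' := ENNReal.ofReal_le_ofReal (by rw [dist_comm]; exact this.le)
        _ ≤ ε := hle
    have hnec' : NecessaryRel G (M ∪ range xs) xb vb := by
      refine ⟨Or.inl hxbM, ?_⟩
      have h1 : ContinuousWithinAt (fun y => EMetric.infEdist vb (G y)) (range xs) xb := by
        rw [ContinuousWithinAt, h0]; exact hScont
      exact hcont.union h1
    obtain ⟨U, hU, hsubU⟩ := hmax _ hnec'
    obtain ⟨δ, hδ, hballU⟩ := Metric.mem_nhds_iff.mp hU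
    obtain ⟨j, hj⟩ := exists_pow_lt_of_lt_one hδ (by norm_num : (1 / 2 : ℝ) < 1)
    have hjU : xs j ∈ U := hballU (mem_ball.mpr (lt_of_lt_of_le (hx j) ((hrpow j).trans hj.le)))
    exact hxM j (hsubU ⟨Or.inr ⟨j, rfl⟩, hjU⟩).1
  tfae_finish
end
end

section
/- Let G : ℝⁿ ⇉ ℝᵐ be a set-valued mapping that is inner semicontinuous, relative to dom G, at a point x̄ ∈ dom G. Then dom G is a locally minimal identifiable set at x̄ for every vector v̄ ∈ G(x̄). -/
open Filter Topology Metric Set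
open scoped RealInnerProductSpace

noncomputable section

/-- if `G` is inner semicontinuous relative to `dom G` at `xb ∈ dom G`,
then `dom G` is a locally minimal identifiable set at `xb` for every `vb ∈ G xb`. -/
theorem statement2 {n m : ℕ} (G : Euc n → Set (Euc m)) (xb : Euc n)
    (hxb : xb ∈ {x | (G x).Nonempty})
    (hisc : InnerSemicontinuousOnAt G {x | (G x).Nonempty} xb) :
    ∀ vb ∈ G xb, LocallyMinimalIdentifiableRel G {x | (G x).Nonempty} xb vb := by
  intro vb hvb
  constructor
  · refine ⟨univ, univ_mem, fun p hp => ⟨?_, trivial⟩⟩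
    exact Set.mem_prod.mpr ⟨⟨p.2, hp.1⟩, trivial⟩
  · intro M' hM'
    obtain ⟨W, hW, hWsub⟩ := hM'
    by_contra hcon
    have key : ∀ i : ℕ, ∃ x, x ∈ {x | (G x).Nonempty} ∧
        dist x xb < 1 / (i + 1) ∧ x ∉ M' := by
      intro i
      by_contra hk
      push_neg at hk
      refine hcon ⟨ball xb (1 / (i + 1)), ball_mem_nhds xb (by positivity), ?_⟩
      intro z hz
      exact ⟨hk z hz.1 (mem_ball.mp hz.2), hz.2⟩
    choose xs hxs hdist hnot using key
    have hxst : Tendsto xs atTop (𝓝 xb) := by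
      rw [tendsto_iff_dist_tendsto_zero]
      refine squeeze_zero (fun i => dist_nonneg) (fun i => (hdist i).le) ?_
      exact tendsto_one_div_add_atTop_nhds_zero_nat
    obtain ⟨vs, hvs, hvst⟩ := hisc xs hxs hxst vb hvb
    have hpt : Tendsto (fun i => (xs i, vs i)) atTop (𝓝 (xb, vb)) :=
      hxst.prodMk_nhds hvst
    have hev : ∀ᶠ i in atTop, (xs i, vs i) ∈ W := hpt hW
    obtain ⟨N, hN⟩ := hev.exists
    have : (xs N, vs N) ∈ (M' ×ˢ (univ : Set (Euc m))) ∩ W :=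
      hWsub ⟨hvs N, hN⟩
    exact hnot N this.1.1
end
end

section
/- Let G₁,…,G_k : ℝⁿ ⇉ ℝᵐ be outer semicontinuous set-valued mappings and define the pointwise union G(x) := ⋃_{i=1}^{k} Gᵢ(x). Fix x̄ ∈ ℝⁿ and v̄ ∈ G(x̄), and suppose that for each index i with v̄ ∈ Gᵢ(x̄) there exists a locally minimal identifiable set Mᵢ (relative to Gᵢ) at x̄ for v̄. Then M := ⋃_{i : v̄ ∈ Gᵢ(x̄)} Mᵢ is a locally minimal identifiable set (relative to G) at x̄ for v̄. -/
open Filter Topology Metric Set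
open scoped RealInnerProductSpace

noncomputable section

/-- pointwise unions of outer semicontinuous mappings. -/
theorem statement3 {n m : ℕ} {k : ℕ} (G : Fin k → (Euc n → Set (Euc m)))
    (hosc : ∀ i, OuterSemicontinuousSV (G i))
    (xb : Euc n) (vb : Euc m) (hvb : vb ∈ ⋃ i, G i xb)
    (M : Fin k → Set (Euc n))
    (hM : ∀ i, vb ∈ G i xb → LocallyMinimalIdentifiableRel (G i) (M i) xb vb) :
    LocallyMinimalIdentifiableRel (fun x => ⋃ i, G i x)
      (⋃ i ∈ {i : Fin k | vb ∈ G i xb}, M i) xb vb := by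
  classical
  have hkey : ∀ i : Fin k, ∃ U ∈ 𝓝 ((xb, vb) : Euc n × Euc m),
      svGraph (G i) ∩ U ⊆
        ((⋃ j ∈ {j : Fin k | vb ∈ G j xb}, M j) ×ˢ (univ : Set (Euc m))) ∩ U := by
    intro i
    by_cases hi : vb ∈ G i xb
    · obtain ⟨⟨U, hUm, hsub⟩, _⟩ := hM i hi
      exact ⟨U, hUm, fun p hp => ⟨⟨mem_biUnion hi (hsub hp).1.1, trivial⟩, hp.2⟩⟩
    · have hnc : (xb, vb) ∉ closure (svGraph (G i)) := by
        intro hc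
        obtain ⟨p, hpmem, hp⟩ := mem_closure_iff_seq_limit.1 hc
        exact hi (hosc i xb vb (fun j => (p j).1) (fun j => (p j).2)
          ((continuous_fst.tendsto _).comp hp) ((continuous_snd.tendsto _).comp hp) hpmem)
      exact ⟨(closure (svGraph (G i)))ᶜ,
        isClosed_closure.isOpen_compl.mem_nhds hnc,
        fun p hp => absurd (subset_closure hp.1) hp.2⟩
  choose U hUmem hUsub using hkey
  constructor
  · refine ⟨⋂ i, U i, Filter.iInter_mem.2 hUmem, ?_⟩
    rintro ⟨x, v⟩ ⟨hg, hUi⟩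
    obtain ⟨i, hvi⟩ := mem_iUnion.1 hg
    exact ⟨(hUsub i ⟨hvi, mem_iInter.1 hUi i⟩).1, hUi⟩
  · intro M' hM'
    obtain ⟨U', hU'm, hsub'⟩ := hM'
    have hV : ∀ i : Fin k, ∃ V ∈ 𝓝 xb,
        (if vb ∈ G i xb then M i else ∅) ∩ V ⊆ M' ∩ V := by
      intro i
      by_cases hi : vb ∈ G i xb
      · have hid : IdentifiableRel (G i) M' xb vb :=
          ⟨U', hU'm, fun p hp => hsub' ⟨mem_iUnion.2 ⟨i, hp.1⟩, hp.2⟩⟩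
        obtain ⟨V, hVm, hVs⟩ := (hM i hi).2 M' hid
        exact ⟨V, hVm, by rw [if_pos hi]; exact hVs⟩
      · exact ⟨univ, univ_mem, by simp [hi]⟩
    choose V hVmem hVsub using hV
    refine ⟨⋂ i, V i, Filter.iInter_mem.2 hVmem, ?_⟩
    rintro x ⟨hx, hxV⟩
    obtain ⟨i, hi, hxi⟩ := mem_iUnion₂.1 hx
    exact ⟨(hVsub i ⟨by have hi' : vb ∈ G i xb := hi; rw [if_pos hi']; exact hxi, mem_iInter.1 hxV i⟩).1, hxV⟩
end
end

section
/- Let Q ⊂ ℝⁿ be a closed set and M ⊂ Q a locally minimal identifiable set at x̄ for v̄ ∈ N_Q(x̄). Then M is locally closed at x̄, i.e. there is a neighborhood U of x̄ such that M ∩ U is closed in U. -/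
open Filter Topology Metric Set
open scoped RealInnerProductSpace

noncomputable section

/-- The limiting normal cone has closed graph (diagonal argument). -/
lemma limNC_closedGraph {n : ℕ} (Q : Set (Euc n)) {x v : Euc n} {xs vs : ℕ → Euc n}
    (hmem : ∀ i, vs i ∈ limitingNormalCone Q (xs i))
    (hx : Tendsto xs atTop (𝓝 x)) (hv : Tendsto vs atTop (𝓝 v)) :
    v ∈ limitingNormalCone Q x := by
  have key : ∀ i : ℕ, ∃ y w : Euc n, w ∈ frechetNormalCone Q y ∧
      dist y (xs i) < 1 / ((i : ℝ) + 1) ∧ dist w (vs i) < 1 / ((i : ℝ) + 1) := by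
    intro i
    obtain ⟨ys, ws, hF, hys, hws⟩ := hmem i
    have hpos : (0 : ℝ) < 1 / ((i : ℝ) + 1) := by positivity
    have h1 : ∀ᶠ k in atTop, dist (ys k) (xs i) < 1 / ((i : ℝ) + 1) :=
      hys (Metric.ball_mem_nhds _ hpos)
    have h2 : ∀ᶠ k in atTop, dist (ws k) (vs i) < 1 / ((i : ℝ) + 1) :=
      hws (Metric.ball_mem_nhds _ hpos)
    obtain ⟨k, hk1, hk2⟩ := (h1.and h2).exists
    exact ⟨ys k, ws k, hF k, hk1, hk2⟩
  choose ys ws hF h1 h2 using key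
  have hlim : Tendsto (fun i : ℕ => 1 / ((i : ℝ) + 1)) atTop (𝓝 0) :=
    tendsto_one_div_add_atTop_nhds_zero_nat
  have hy : Tendsto ys atTop (𝓝 x) := by
    rw [tendsto_iff_dist_tendsto_zero]
    have hb : Tendsto (fun i : ℕ => 1 / ((i : ℝ) + 1) + dist (xs i) x) atTop (𝓝 0) := by
      have := hlim.add (tendsto_iff_dist_tendsto_zero.mp hx)
      simpa using this
    refine squeeze_zero (fun i => dist_nonneg) (fun i => ?_) hb
    calc dist (ys i) x ≤ dist (ys i) (xs i) + dist (xs i) x := dist_triangle _ _ _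
      _ ≤ 1 / ((i : ℝ) + 1) + dist (xs i) x := by linarith [h1 i]
  have hw : Tendsto ws atTop (𝓝 v) := by
    rw [tendsto_iff_dist_tendsto_zero]
    have hb : Tendsto (fun i : ℕ => 1 / ((i : ℝ) + 1) + dist (vs i) v) atTop (𝓝 0) := by
      have := hlim.add (tendsto_iff_dist_tendsto_zero.mp hv)
      simpa using this
    refine squeeze_zero (fun i => dist_nonneg) (fun i => ?_) hb
    calc dist (ws i) v ≤ dist (ws i) (vs i) + dist (vs i) v := dist_triangle _ _ _
      _ ≤ 1 / ((i : ℝ) + 1) + dist (vs i) v := by linarith [h2 i]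
  exact ⟨ys, ws, hF, hy, hw⟩

/-- locally minimal identifiable sets are locally closed. -/
theorem statement7 {n : ℕ} (Q : Set (Euc n)) (hQ : IsClosed Q)
    (M : Set (Euc n)) (hMQ : M ⊆ Q) (xb vb : Euc n)
    (hvb : vb ∈ limitingNormalCone Q xb)
    (hmin : LocallyMinimalIdentifiableIn Q M xb vb) :
    LocallyClosedAt M xb := by
  obtain ⟨⟨W, hW, hWspec⟩, hminim⟩ := hmin
  obtain ⟨r, hr, hrW⟩ := Metric.mem_nhds_iff.mp hW
  set ε := r / 2 with hε
  have hεpos : 0 < ε := half_pos hr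
  -- the canonical identifiable set
  set S : Set (Euc n) := {x | (x ∈ Q ∧ x ∈ closedBall xb ε) ∧
      ∃ w ∈ limitingNormalCone Q x, w ∈ closedBall vb ε} with hS
  -- S is closed
  have hSclosed : IsClosed S := by
    refine IsSeqClosed.isClosed ?_
    intro ys y hmemS hy
    choose hQb hw using hmemS
    choose ws hwN hwB using hw
    obtain ⟨w, hwmem, φ, hφ, hconv⟩ :=
      (isCompact_closedBall vb ε).tendsto_subseq hwB
    have hN : w ∈ limitingNormalCone Q y :=
      limNC_closedGraph Q (fun i => hwN (φ i)) (hy.comp hφ.tendsto_atTop) hconv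
    refine ⟨⟨hQ.mem_of_tendsto hy (Eventually.of_forall fun i => (hQb i).1), ?_⟩,
      w, hN, hwmem⟩
    exact Metric.isClosed_closedBall.mem_of_tendsto hy (Eventually.of_forall fun i => (hQb i).2)
  -- S ⊆ M
  have hSM : S ⊆ M := by
    rintro x ⟨⟨hxQ, hxB⟩, w, hwN, hwB⟩
    refine hWspec (x, w) (hrW ?_) hxQ hwN
    have : dist (x, w) (xb, vb) = max (dist x xb) (dist w vb) := Prod.dist_eq
    rw [Metric.mem_ball, this]
    have h1 : dist x xb ≤ ε := Metric.mem_closedBall.mp hxB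
    have h2 : dist w vb ≤ ε := Metric.mem_closedBall.mp hwB
    have : max (dist x xb) (dist w vb) ≤ ε := max_le h1 h2
    linarith [half_lt_self hr]
  -- S is identifiable
  have hSid : IdentifiableIn Q S xb vb := by
    refine ⟨Metric.ball (xb, vb) ε, Metric.ball_mem_nhds _ hεpos, ?_⟩
    rintro ⟨x, w⟩ hp hxQ hwN
    rw [Metric.mem_ball, Prod.dist_eq] at hp
    exact ⟨⟨hxQ, Metric.mem_closedBall.mpr
        (le_of_lt (lt_of_le_of_lt (le_max_left _ _) hp))⟩,
      w, hwN, Metric.mem_closedBall.mpr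
        (le_of_lt (lt_of_le_of_lt (le_max_right _ _) hp))⟩
  -- minimality: M ⊆ S locally
  obtain ⟨U, hU, hMU⟩ := hminim S hSid
  obtain ⟨δ', hδ', hδ'U⟩ := Metric.mem_nhds_iff.mp hU
  refine ⟨min (δ' / 2) ε, lt_min (half_pos hδ') hεpos, ?_⟩
  have heq : M ∩ closedBall xb (min (δ' / 2) ε) = S ∩ closedBall xb (min (δ' / 2) ε) := by
    ext x
    constructor
    · rintro ⟨hxM, hxB⟩
      have hxU : x ∈ U := by
        apply hδ'U
        rw [Metric.mem_ball]
        have : dist x xb ≤ min (δ' / 2) ε := Metric.mem_closedBall.mp hxB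
        have := le_trans this (min_le_left _ _)
        linarith [half_lt_self hδ']
      exact ⟨(hMU ⟨hxM, hxU⟩).1, hxB⟩
    · rintro ⟨hxS, hxB⟩
      exact ⟨hSM hxS, hxB⟩
  rw [heq]
  exact hSclosed.inter Metric.isClosed_closedBall
end
end

section
/- Let Q ⊂ ℝⁿ be a closed set and let M be identifiable (relative to Q) at x̄ for v̄ ∈ N_Q(x̄). Then the inclusion gph N_Q ⊂ gph N_M holds locally around (x̄, v̄): there is a neighborhood of (x̄, v̄) in which every pair (x, v) with v ∈ N_Q(x) satisfies v ∈ N_M(x). -/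
open Filter Topology Metric Set
open scoped RealInnerProductSpace

noncomputable section

/-- for an identifiable set, `gph N_Q ⊆ gph N_M` locally around `(xb, vb)`. -/
theorem statement8 {n : ℕ} (Q : Set (Euc n)) (hQ : IsClosed Q)
    (M : Set (Euc n)) (hMQ : M ⊆ Q) (xb vb : Euc n)
    (hvb : vb ∈ limitingNormalCone Q xb)
    (hid : IdentifiableIn Q M xb vb) :
    ∃ W ∈ 𝓝 (xb, vb), ∀ p : Euc n × Euc n, p ∈ W →
      p.2 ∈ limitingNormalCone Q p.1 → p.2 ∈ limitingNormalCone M p.1 := by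
  obtain ⟨W, hW, hWprop⟩ := hid
  refine ⟨interior W, interior_mem_nhds.2 hW, ?_⟩
  rintro ⟨x, v⟩ hp hv
  obtain ⟨xs, vs, hfs, hxs, hvs⟩ := hv
  have hmem : ∀ᶠ i in atTop, (xs i, vs i) ∈ interior W :=
    (hxs.prodMk_nhds hvs) (isOpen_interior.mem_nhds hp)
  obtain ⟨N, hN⟩ := eventually_atTop.1 hmem
  have hM : ∀ i ≥ N, xs i ∈ M := by
    intro i hi
    refine hWprop (xs i, vs i) (interior_subset (hN i hi)) (hfs i).1 ?_
    exact ⟨fun _ => xs i, fun _ => vs i, fun _ => hfs i, tendsto_const_nhds,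
      tendsto_const_nhds⟩
  refine ⟨fun i => xs (i + N), fun i => vs (i + N), fun i => ?_,
    hxs.comp (tendsto_add_atTop_nat N), hvs.comp (tendsto_add_atTop_nat N)⟩
  refine ⟨hM _ (Nat.le_add_left N i), fun ε hε => ?_⟩
  obtain ⟨δ, hδ, hδ'⟩ := (hfs (i + N)).2 ε hε
  exact ⟨δ, hδ, fun y hy => hδ' y (hMQ hy)⟩
end
end

section
/- Let Q ⊂ ℝⁿ be a closed set and let M ⊂ Q be identifiable at x̄ for a Fréchet normal v̄ ∈ N̂_Q(x̄). If M is prox-regular at x̄ for v̄ (viewing v̄ as an element of N_M(x̄)), then Q is prox-regular at x̄ for v̄. -/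
open Filter Topology Metric Set
open scoped RealInnerProductSpace

noncomputable section

/-!
Take `r = ε⁻¹` with `ε` small. For `x ∈ Q` near `xb` and `v ∈ N_Q(x)` near `vb`, identifiability
puts `x` in `M` and `v` in `N_M(x)`. A nearest point `z` of `Q` to `p = x + ε • v` carries the
proximal normal `w = v + ε⁻¹ • (x - z)`, and `‖w‖ ≤ ‖v‖`. Expanding `‖w - vb‖²`, the cross terms
enter with the factor `2ε⁻¹`, and they are small enough: `⟪v, xb - x⟫ = O(ε²)` by prox-regularity
of `M`, and `⟪vb, z - xb⟫ = o(ε)` because `vb` is a Fréchet normal and `‖z - xb‖ = O(ε)`. So `w` is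
close to `vb`, identifiability puts `z` in `M`, and `z` must then be the unique nearest point `x`
of `M` to `p`.
-/

section NearestPoints

variable {E : Type*} [NormedAddCommGroup E] [InnerProductSpace ℝ E]

theorem dist_add_smul_sq (x y v : E) (a : ℝ) :
    dist (x + a • v) y ^ 2 = dist (x + a • v) x ^ 2 - 2 * a * ⟪v, y - x⟫ + ‖y - x‖ ^ 2 := by
  rw [dist_eq_norm, dist_eq_norm, add_sub_cancel_left,
    show x + a • v - y = a • v - (y - x) by abel, norm_sub_sq_real, real_inner_smul_left]
  ring

theorem dist_add_smul_le_dist_iff {x y v : E} {a : ℝ} :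
    dist (x + a • v) x ≤ dist (x + a • v) y ↔ 2 * a * ⟪v, y - x⟫ ≤ ‖y - x‖ ^ 2 := by
  rw [← sq_le_sq₀ dist_nonneg dist_nonneg, dist_add_smul_sq x y]
  constructor <;> intro h <;> linarith

theorem dist_add_smul_lt_dist_iff {x y v : E} {a : ℝ} :
    dist (x + a • v) x < dist (x + a • v) y ↔ 2 * a * ⟪v, y - x⟫ < ‖y - x‖ ^ 2 := by
  rw [← sq_lt_sq₀ dist_nonneg dist_nonneg, dist_add_smul_sq x y]
  constructor <;> intro h <;> linarith

theorem IsUniqueNearestPt.two_mul_inner_le {S : Set E} {x y v : E} {a : ℝ}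
    (h : IsUniqueNearestPt S (x + a • v) x) (hy : y ∈ S) :
    2 * a * ⟪v, y - x⟫ ≤ ‖y - x‖ ^ 2 := by
  rcases eq_or_ne y x with rfl | hyx
  · simp
  · exact dist_add_smul_le_dist_iff.1 (h.2 y hy hyx).le

theorem IsUniqueNearestPt.of_smul_le {S : Set E} {x v : E} {a b : ℝ}
    (h : IsUniqueNearestPt S (x + a • v) x) (hb : 0 ≤ b) (hba : b ≤ a) :
    IsUniqueNearestPt S (x + b • v) x := by
  refine ⟨h.1, fun y hy hyx => dist_add_smul_lt_dist_iff.2 ?_⟩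
  have ha := dist_add_smul_lt_dist_iff.1 (h.2 y hy hyx)
  have hpos : 0 < ‖y - x‖ ^ 2 := pow_pos (norm_pos_iff.2 (sub_ne_zero.2 hyx)) 2
  rcases le_or_gt ⟪v, y - x⟫ 0 with hneg | hpos' <;> nlinarith

theorem dist_le_of_mem_nearestPts_add_smul {Q : Set E} {x v z : E} {ε : ℝ} (hxQ : x ∈ Q)
    (hε : 0 ≤ ε) (hz : z ∈ nearestPts Q (x + ε • v)) : dist (x + ε • v) z ≤ ε * ‖v‖ := by
  have := hz.2 x hxQ
  rwa [dist_eq_norm (x + ε • v) x, add_sub_cancel_left, norm_smul, Real.norm_of_nonneg hε] at this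

theorem dist_lt_of_mem_nearestPts_add_smul {Q : Set E} {x v z xb vb : E} {ε : ℝ} (hxQ : x ∈ Q)
    (hε : ε ≤ 1) (hx : dist x xb < ε) (hv : dist v vb < ε) (hz : z ∈ nearestPts Q (x + ε • v)) :
    dist z xb < (2 * ‖vb‖ + 3) * ε := by
  have hε0 : 0 ≤ ε := dist_nonneg.trans hx.le
  have hvnorm : ‖v‖ ≤ ‖vb‖ + 1 := by linarith [norm_le_norm_add_norm_sub' v vb, dist_eq_norm v vb]
  have hpz := dist_le_of_mem_nearestPts_add_smul hxQ hε0 hz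
  have hpx : dist (x + ε • v) x = ε * ‖v‖ := by
    rw [dist_eq_norm, add_sub_cancel_left, norm_smul, Real.norm_of_nonneg hε0]
  calc dist z xb ≤ dist z (x + ε • v) + dist (x + ε • v) x + dist x xb := dist_triangle4 _ _ _ _
    _ < ε * ‖v‖ + ε * ‖v‖ + ε := by rw [dist_comm] at hpz; linarith
    _ ≤ (2 * ‖vb‖ + 3) * ε := by nlinarith

theorem norm_add_inv_smul_sub_le {Q : Set E} {x v z : E} {ε : ℝ} (hxQ : x ∈ Q) (hε : 0 < ε)
    (hz : z ∈ nearestPts Q (x + ε • v)) : ‖v + ε⁻¹ • (x - z)‖ ≤ ‖v‖ := by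
  have hw : v + ε⁻¹ • (x - z) = ε⁻¹ • (x + ε • v - z) := by
    simp only [smul_sub, smul_add, inv_smul_smul₀ hε.ne']
    abel
  rw [hw, norm_smul, Real.norm_of_nonneg (inv_nonneg.2 hε.le), ← dist_eq_norm, inv_mul_le_iff₀ hε]
  exact dist_le_of_mem_nearestPts_add_smul hxQ hε.le hz

end NearestPoints

section Proper

variable {E : Type*} [NormedAddCommGroup E] [ProperSpace E]

theorem IsUniqueNearestPt.of_nearestPts_subset {Q S B : Set E} {p x : E}
    (hS : IsUniqueNearestPt S p x) (hQ : IsClosed Q) (hx : x ∈ Q ∩ B)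
    (hQS : nearestPts Q p ⊆ S) : IsUniqueNearestPt (Q ∩ B) p x := by
  have hxQ : x ∈ nearestPts Q p := by
    obtain ⟨z, hzQ, hz⟩ := hQ.exists_infDist_eq_dist ⟨x, hx.1⟩ p
    have hzQ' : z ∈ nearestPts Q p := ⟨hzQ, fun y hy => hz ▸ infDist_le_dist_of_mem hy⟩
    obtain rfl : z = x := by
      by_contra hzx
      exact (hS.2 z (hQS hzQ') hzx).not_ge (hzQ'.2 x hx.1)
    exact hzQ'
  refine ⟨hx, fun y hy hyx => lt_of_not_ge fun hyp => ?_⟩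
  exact (hS.2 y (hQS ⟨hy.1, fun w hw => hyp.trans (hxQ.2 w hw)⟩) hyx).not_ge hyp

end Proper

section NormalCones

variable {E : Type*} [NormedAddCommGroup E] [InnerProductSpace ℝ E]

theorem proxNormalCone_subset_frechetNormalCone (Q : Set E) (x : E) :
    proxNormalCone Q x ⊆ frechetNormalCone Q x := by
  rintro v ⟨hx, r, hr, h⟩
  refine ⟨hx, fun ε hε => ⟨2 * ε / r, by positivity, fun y hy hyx => ?_⟩⟩
  have hquad := dist_add_smul_le_dist_iff.1 (h y hy)
  rw [dist_eq_norm] at hyx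
  have hn : r * ‖y - x‖ ≤ 2 * ε := by rw [lt_div_iff₀ hr, mul_comm] at hyx; exact hyx.le
  calc ⟪v, y - x⟫ = r / 2 * (2 * r⁻¹ * ⟪v, y - x⟫) := by field_simp
    _ ≤ r / 2 * ‖y - x‖ ^ 2 := by gcongr
    _ = r * ‖y - x‖ / 2 * ‖y - x‖ := by ring
    _ ≤ ε * ‖y - x‖ := by gcongr; linarith

theorem frechetNormalCone_subset_limitingNormalCone (Q : Set E) (x : E) :
    frechetNormalCone Q x ⊆ limitingNormalCone Q x :=
  fun _ h => ⟨fun _ => x, fun _ => _, fun _ => h, tendsto_const_nhds, tendsto_const_nhds⟩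

theorem frechetNormalCone_mono {M Q : Set E} (hMQ : M ⊆ Q) {x : E} (hx : x ∈ M) :
    frechetNormalCone Q x ⊆ frechetNormalCone M x :=
  fun _ h => ⟨hx, fun ε hε => (h.2 ε hε).imp fun _ ⟨hδ, hy⟩ => ⟨hδ, fun y hyM => hy y (hMQ hyM)⟩⟩

theorem mem_limitingNormalCone_of_tendsto {M Q : Set E} (hMQ : M ⊆ Q) {x v : E} {xs vs : ℕ → E}
    (hfr : ∀ i, vs i ∈ frechetNormalCone Q (xs i)) (hxs : Tendsto xs atTop (𝓝 x))
    (hvs : Tendsto vs atTop (𝓝 v)) (hM : ∀ᶠ i in atTop, xs i ∈ M) :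
    v ∈ limitingNormalCone M x := by
  obtain ⟨N, hN⟩ := eventually_atTop.1 hM
  exact ⟨fun i => xs (i + N), fun i => vs (i + N),
    fun i => frechetNormalCone_mono hMQ (hN _ (Nat.le_add_left N i)) (hfr _),
    (tendsto_add_atTop_iff_nat N).2 hxs, (tendsto_add_atTop_iff_nat N).2 hvs⟩

theorem add_inv_smul_sub_mem_proxNormalCone {Q : Set E} {x v z : E} {ε : ℝ} (hε : 0 < ε)
    (hz : z ∈ nearestPts Q (x + ε • v)) : v + ε⁻¹ • (x - z) ∈ proxNormalCone Q z := by
  refine ⟨hz.1, ε⁻¹, inv_pos.2 hε, ?_⟩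
  have hp : z + ε • (v + ε⁻¹ • (x - z)) = x + ε • v := by
    rw [smul_add, smul_inv_smul₀ hε.ne']
    abel
  rw [inv_inv, hp]
  exact hz.2

theorem norm_add_smul_sub_sq_le {x xb z v vb : E} {r : ℝ} (h : ‖v + r • (x - z)‖ ≤ ‖v‖) :
    ‖v + r • (x - z) - vb‖ ^ 2 ≤
      ‖v - vb‖ ^ 2 + 2 * r * (⟪v, xb - x⟫ + ⟪v - vb, x - xb⟫ + ⟪vb, z - xb⟫) := by
  have h2 : ‖v + r • (x - z)‖ ^ 2 ≤ ‖v‖ ^ 2 := pow_le_pow_left₀ (norm_nonneg _) h 2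
  rw [norm_sub_sq_real, norm_sub_sq_real]
  simp only [inner_add_right, inner_sub_left, inner_sub_right, real_inner_smul_right,
    real_inner_comm vb] at *
  nlinarith

end NormalCones

section Identifiability

variable {E : Type*} [NormedAddCommGroup E] [InnerProductSpace ℝ E]

theorem IdentifiableIn.exists_forall_mem {Q M : Set E} {xb vb : E}
    (hid : IdentifiableIn Q M xb vb) :
    ∃ η > 0, ∀ x ∈ Q, ∀ v ∈ limitingNormalCone Q x, dist x xb < η → dist v vb < η → x ∈ M := by
  obtain ⟨W, hW, hWM⟩ := hid
  obtain ⟨η, hη, hball⟩ := Metric.mem_nhds_iff.1 hW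
  exact ⟨η, hη, fun x hx v hv hxη hvη =>
    hWM (x, v) (hball (by rw [mem_ball, Prod.dist_eq]; exact max_lt hxη hvη)) hx hv⟩

/-- Identifiability also passes to the Fréchet normals approximating a limiting normal. -/
theorem IdentifiableIn.exists_forall_mem_limitingNormalCone {Q M : Set E} {xb vb : E}
    (hid : IdentifiableIn Q M xb vb) (hMQ : M ⊆ Q) :
    ∃ η > 0, ∀ x ∈ Q, ∀ v ∈ limitingNormalCone Q x, dist x xb < η → dist v vb < η →
      x ∈ M ∧ v ∈ limitingNormalCone M x := by
  obtain ⟨η, hη, hW⟩ := hid.exists_forall_mem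
  refine ⟨η / 2, half_pos hη, fun x hx v hv hxη hvη =>
    ⟨hW x hx v hv (by linarith) (by linarith), ?_⟩⟩
  obtain ⟨xs, vs, hfr, hxs, hvs⟩ := hv
  refine mem_limitingNormalCone_of_tendsto hMQ hfr hxs hvs ?_
  filter_upwards [hxs (ball_mem_nhds x (half_pos hη)), hvs (ball_mem_nhds v (half_pos hη))]
    with i hxi hvi
  refine hW _ (hfr i).1 _ (frechetNormalCone_subset_limitingNormalCone _ _ (hfr i)) ?_ ?_
  · linarith [dist_triangle (xs i) x xb, mem_ball.1 hxi]
  · linarith [dist_triangle (vs i) v vb, mem_ball.1 hvi]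

theorem eventually_mul_lt_nhdsGT (a : ℝ) {b : ℝ} (hb : 0 < b) :
    ∀ᶠ ε in 𝓝[>] (0 : ℝ), ε * a < b := by
  have h : Tendsto (fun ε : ℝ => ε * a) (𝓝 0) (𝓝 0) := by
    simpa using (continuous_mul_const a).tendsto 0
  exact nhdsWithin_le_nhds (h.eventually_lt_const hb)

theorem IdentifiableIn.eventually_nearestPts_subset {Q M : Set E} {xb vb : E}
    (hid : IdentifiableIn Q M xb vb) (hvb : vb ∈ frechetNormalCone Q xb) {a : ℝ} (ha : 0 < a) :
    ∀ᶠ ε in 𝓝[>] (0 : ℝ), ∀ x ∈ Q, ∀ v : E, dist x xb < ε → dist v vb < ε →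
      2 * a * ⟪v, xb - x⟫ ≤ ‖xb - x‖ ^ 2 →
      nearestPts Q (x + ε • v) ⊆ M ∩ ball xb ((2 * ‖vb‖ + 3) * ε) := by
  obtain ⟨η, hη, hW⟩ := hid.exists_forall_mem
  set L := 2 * ‖vb‖ + 3
  have hL : 0 < L := by positivity
  obtain ⟨ρ, hρ, hfr⟩ := hvb.2 (η ^ 2 / (4 * L)) (by positivity)
  filter_upwards [eventually_mul_lt_nhdsGT L (lt_min hη hρ), eventually_mul_lt_nhdsGT 1 one_pos,
    eventually_mul_lt_nhdsGT (a⁻¹ + 3) (half_pos (pow_pos hη 2)), self_mem_nhdsWithin]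
    with ε hεL hε1 hεa (hε : 0 < ε) x hxQ v hx hv hquad z hz
  rw [mul_one] at hε1
  have hzxb := dist_lt_of_mem_nearestPts_add_smul hxQ hε1.le hx hv hz
  refine ⟨hW z hz.1 (v + ε⁻¹ • (x - z)) (frechetNormalCone_subset_limitingNormalCone _ _
    (proxNormalCone_subset_frechetNormalCone _ _ (add_inv_smul_sub_mem_proxNormalCone hε hz)))
    (by linarith [(lt_min_iff.1 hεL).1]) ?_, hzxb⟩
  have hxn : ‖x - xb‖ ≤ ε := by rw [← dist_eq_norm]; exact hx.le
  have hvn : ‖v - vb‖ ≤ ε := by rw [← dist_eq_norm]; exact hv.le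
  have h1 : ⟪v, xb - x⟫ ≤ a⁻¹ / 2 * ε ^ 2 := by
    calc ⟪v, xb - x⟫ = a⁻¹ / 2 * (2 * a * ⟪v, xb - x⟫) := by field_simp
      _ ≤ a⁻¹ / 2 * ‖x - xb‖ ^ 2 := by rw [norm_sub_rev]; gcongr
      _ ≤ a⁻¹ / 2 * ε ^ 2 := by gcongr
  have h2 : ⟪v - vb, x - xb⟫ ≤ ε * ε :=
    (real_inner_le_norm _ _).trans (mul_le_mul hvn hxn (norm_nonneg _) hε.le)
  have h3 : ⟪vb, z - xb⟫ ≤ ε * (η ^ 2 / 4) := by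
    calc ⟪vb, z - xb⟫ ≤ η ^ 2 / (4 * L) * ‖z - xb‖ :=
          hfr z hz.1 (by linarith [(lt_min_iff.1 hεL).2])
      _ ≤ η ^ 2 / (4 * L) * (L * ε) := by rw [← dist_eq_norm]; gcongr
      _ = ε * (η ^ 2 / 4) := by field_simp
  have hcross : ⟪v, xb - x⟫ + ⟪v - vb, x - xb⟫ + ⟪vb, z - xb⟫ ≤
      ε * (a⁻¹ / 2 * ε + ε + η ^ 2 / 4) := by linarith
  rw [← sq_lt_sq₀ dist_nonneg hη.le, dist_eq_norm]
  calc ‖v + ε⁻¹ • (x - z) - vb‖ ^ 2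
      ≤ ‖v - vb‖ ^ 2 + 2 * ε⁻¹ * (⟪v, xb - x⟫ + ⟪v - vb, x - xb⟫ + ⟪vb, z - xb⟫) :=
        norm_add_smul_sub_sq_le (norm_add_inv_smul_sub_le hxQ hε hz)
    _ ≤ ε ^ 2 + 2 * ε⁻¹ * (ε * (a⁻¹ / 2 * ε + ε + η ^ 2 / 4)) := by gcongr
    _ = ε ^ 2 + ε * (a⁻¹ + 2) + η ^ 2 / 2 := by field_simp; ring
    _ < η ^ 2 := by nlinarith

end Identifiability

theorem statement9_general {n : ℕ} (Q : Set (Euc n)) (hQ : IsClosed Q)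
    (M : Set (Euc n)) (hMQ : M ⊆ Q) (xb vb : Euc n)
    (hvb : vb ∈ frechetNormalCone Q xb)
    (hid : IdentifiableIn Q M xb vb) (hprox : ProxRegularAt M xb vb) :
    ProxRegularAt Q xb vb := by
  obtain ⟨η, hη, hloc⟩ := hid.exists_forall_mem_limitingNormalCone hMQ
  have hxbM : xb ∈ M := (hloc xb hvb.1 vb (frechetNormalCone_subset_limitingNormalCone _ _ hvb)
    (by simpa using hη) (by simpa using hη)).1
  obtain ⟨-, εM, hεM, rM, hrM, hMprox⟩ := hprox
  obtain ⟨ε, (hε : 0 < ε), hnear, hεη, hεL, hεr⟩ := (eventually_mem_nhdsWithin.and <|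
    (hid.eventually_nearestPts_subset hvb (inv_pos.2 hrM)).and <|
    (eventually_mul_lt_nhdsGT 1 hη).and <|
    (eventually_mul_lt_nhdsGT (2 * ‖vb‖ + 3) hεM).and (eventually_mul_lt_nhdsGT rM one_pos)).exists
  have hεLM : ε < εM := by nlinarith [norm_nonneg vb]
  refine ⟨⟨1, one_pos, hQ.inter isClosed_closedBall⟩, ε, hε, ε⁻¹, inv_pos.2 hε,
    fun x hxQ v hv hx hv' => ?_⟩
  rw [inv_inv]
  obtain ⟨hxM, hvM⟩ := hloc x hxQ v hv (by linarith) (by linarith)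
  have hMx := hMprox x hxM v hvM (hx.trans hεLM) (hv'.trans hεLM)
  refine (hMx.of_smul_le hε.le ?_).of_nearestPts_subset hQ ⟨hxQ, mem_closedBall.2 hx.le⟩ ?_
  · rw [← one_div, le_div_iff₀ hrM]
    exact hεr.le
  refine (hnear x hxQ v hx hv' (hMx.two_mul_inner_le ⟨hxbM, mem_closedBall_self hεM.le⟩)).trans ?_
  exact inter_subset_inter_right _
    (ball_subset_closedBall.trans (closedBall_subset_closedBall (by linarith)))

/-- prox-regularity of an identifiable set is inherited by the whole set. -/
theorem statement9 {n : ℕ} (Q : Set (Euc n)) (hQ : IsClosed Q)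
    (M : Set (Euc n)) (hMQ : M ⊆ Q) (xb vb : Euc n)
    (hvb : vb ∈ frechetNormalCone Q xb) (hvbM : vb ∈ limitingNormalCone M xb)
    (hid : IdentifiableIn Q M xb vb) (hprox : ProxRegularAt M xb vb) :
    ProxRegularAt Q xb vb :=
  statement9_general Q hQ M hMQ xb vb hvb hid hprox
end
end

section
/- (Reduction I) Let Q ⊂ ℝⁿ be a closed set and let M ⊂ Q be a set that is prox-regular at a point x̄ for v̄ ∈ N̂_Q(x̄). Then M is identifiable (relative to Q) at x̄ for v̄ if and only if the equality gph N_Q = gph N_M holds locally around (x̄, v̄). -/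
open Filter Topology Metric Set
open scoped RealInnerProductSpace

noncomputable section

section AuxLemmas

variable {H : Type*} [NormedAddCommGroup H] [InnerProductSpace ℝ H]

lemma frechet_subset_limiting {Q : Set H} {x v : H}
    (h : v ∈ frechetNormalCone Q x) : v ∈ limitingNormalCone Q x :=
  ⟨fun _ => x, fun _ => v, fun _ => h, tendsto_const_nhds, tendsto_const_nhds⟩

lemma frechet_mono {M Q : Set H} (hMQ : M ⊆ Q) {x v : H} (hx : x ∈ M)
    (h : v ∈ frechetNormalCone Q x) : v ∈ frechetNormalCone M x := by
  obtain ⟨-, h⟩ := h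
  refine ⟨hx, fun ε hε => ?_⟩
  obtain ⟨δ, hδ, hy⟩ := h ε hε
  exact ⟨δ, hδ, fun y hyM => hy y (hMQ hyM)⟩

lemma nearest_inner_le {Q : Set H} {z w : H}
    (hmin : ∀ y ∈ Q, dist z w ≤ dist z y) {y : H} (hy : y ∈ Q) :
    ⟪z - w, y - w⟫ ≤ ‖y - w‖ ^ 2 / 2 := by
  have h := hmin y hy
  rw [dist_eq_norm, dist_eq_norm] at h
  have h2 : ‖z - w‖ ^ 2 ≤ ‖z - y‖ ^ 2 := pow_le_pow_left₀ (norm_nonneg _) h 2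
  have e : z - y = (z - w) - (y - w) := by abel
  rw [e] at h2
  have h3 := norm_sub_sq_real (z - w) (y - w)
  rw [h3] at h2
  linarith

lemma nearest_smul_mem_frechet {Q : Set H} {z w : H} (hw : w ∈ Q)
    (hmin : ∀ y ∈ Q, dist z w ≤ dist z y) {t : ℝ} (ht : 0 < t) :
    t⁻¹ • (z - w) ∈ frechetNormalCone Q w := by
  refine ⟨hw, fun ε hε => ⟨2 * t * ε, by positivity, fun y hy hdy => ?_⟩⟩
  have key := nearest_inner_le hmin hy
  rw [real_inner_smul_left]
  rw [dist_eq_norm] at hdy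
  have h1 : (0:ℝ) < t⁻¹ := inv_pos.mpr ht
  have h2 : t * t⁻¹ = 1 := mul_inv_cancel₀ ht.ne'
  nlinarith [norm_nonneg (y - w), mul_le_mul_of_nonneg_left key h1.le]

lemma uniqueNearest_segment {S : Set H} {x v : H} {r t : ℝ} (hr : 0 < r)
    (h : IsUniqueNearestPt S (x + r⁻¹ • v) x) (ht : 0 < t) (htr : t ≤ r⁻¹) :
    IsUniqueNearestPt S (x + t • v) x := by
  obtain ⟨hxS, h⟩ := h
  refine ⟨hxS, fun y hy hyx => ?_⟩
  have h1 := h y hy hyx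
  have e1 : dist (x + t • v) x = t * ‖v‖ := by
    rw [dist_eq_norm, add_sub_cancel_left, norm_smul, Real.norm_eq_abs, abs_of_pos ht]
  have e2 : dist (x + r⁻¹ • v) x = r⁻¹ * ‖v‖ := by
    rw [dist_eq_norm, add_sub_cancel_left, norm_smul, Real.norm_eq_abs,
      abs_of_pos (inv_pos.mpr hr)]
  have e3 : dist (x + r⁻¹ • v) (x + t • v) = (r⁻¹ - t) * ‖v‖ := by
    have e : x + r⁻¹ • v - (x + t • v) = (r⁻¹ - t) • v := by
      rw [sub_smul]; abel
    rw [dist_eq_norm, e, norm_smul, Real.norm_eq_abs, abs_of_nonneg (by linarith)]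
  have tri := dist_triangle (x + r⁻¹ • v) (x + t • v) y
  rw [e1]; rw [e2] at h1; rw [e3] at tri
  linarith

lemma mem_of_locallyClosed {M : Set H} {xb : H} (hc : LocallyClosedAt M xb) :
    ∃ η > (0:ℝ), ∀ x, dist x xb < η → (limitingNormalCone M x).Nonempty → x ∈ M := by
  obtain ⟨ε, hε, hcl⟩ := hc
  refine ⟨ε, hε, fun x hx hne => ?_⟩
  obtain ⟨v, xs, vs, hfs, hxs, -⟩ := hne
  have hev : ∀ᶠ i in atTop, xs i ∈ M ∩ closedBall xb ε := by
    have hd : Tendsto (fun i => dist (xs i) xb) atTop (𝓝 (dist x xb)) :=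
      hxs.dist tendsto_const_nhds
    filter_upwards [hd.eventually (eventually_lt_nhds hx)] with i hi
    exact ⟨(hfs i).1, mem_closedBall.2 hi.le⟩
  exact (hcl.mem_of_tendsto hxs hev).1

lemma identifiable_gph_incl {Q M : Set H} (hMQ : M ⊆ Q) {xb vb : H}
    (hid : IdentifiableIn Q M xb vb) :
    ∃ U ∈ 𝓝 (xb, vb), ∀ x v : H, (x, v) ∈ U →
      v ∈ limitingNormalCone Q x → v ∈ limitingNormalCone M x := by
  obtain ⟨W, hW, hWid⟩ := hid
  refine ⟨interior W, interior_mem_nhds.2 hW, fun x v hxv hvQ => ?_⟩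
  obtain ⟨xs, vs, hfs, hxs, hvs⟩ := hvQ
  have hpair : Tendsto (fun i => (xs i, vs i)) atTop (𝓝 (x, v)) := hxs.prodMk_nhds hvs
  have hev : ∀ᶠ i in atTop, (xs i, vs i) ∈ interior W :=
    hpair.eventually_mem (isOpen_interior.mem_nhds hxv)
  obtain ⟨N, hN⟩ := eventually_atTop.1 hev
  refine ⟨fun i => xs (i + N), fun i => vs (i + N), fun i => ?_,
    hxs.comp (tendsto_add_atTop_nat N), hvs.comp (tendsto_add_atTop_nat N)⟩
  have hM : xs (i + N) ∈ M :=
    hWid (xs (i + N), vs (i + N)) (interior_subset (hN _ (Nat.le_add_left N i)))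
      (hfs _).1 (frechet_subset_limiting (hfs _))
  exact frechet_mono hMQ hM (hfs _)

set_option maxHeartbeats 2000000 in
lemma key_B2 [ProperSpace H] {Q M : Set H} (hQ : IsClosed Q) (hMQ : M ⊆ Q)
    {xb vb : H} (hvb : vb ∈ frechetNormalCone Q xb)
    (hprox : ProxRegularAt M xb vb) (hid : IdentifiableIn Q M xb vb) :
    ∃ δ > (0:ℝ), ∀ x v : H, x ∈ M → v ∈ limitingNormalCone M x →
      dist x xb < δ → dist v vb < δ → v ∈ frechetNormalCone Q x := by
  obtain ⟨-, ε₀, hε₀, r, hr, hproxm⟩ := hprox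
  obtain ⟨W, hW, hWid⟩ := hid
  obtain ⟨ρ, hρ, hρW⟩ := Metric.mem_nhds_iff.1 hW
  set K : ℝ := ‖vb‖ + 1 with hK
  have hK1 : (1:ℝ) ≤ K := by rw [hK]; linarith [norm_nonneg vb]
  have hKpos : (0:ℝ) < K := by linarith
  have hvbK : ‖vb‖ ≤ K := by rw [hK]; linarith
  clear_value K
  set ε₁ : ℝ := ρ ^ 2 / (16 * K) with hε₁def
  have hε₁ : 0 < ε₁ := by positivity
  clear_value ε₁
  obtain ⟨δF, hδF, hF⟩ := hvb.2 ε₁ hε₁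
  -- choose δ
  have hcont : Tendsto (fun δ : ℝ => 5*K*δ + 2*(ε₁+K)*(δ*r + Real.sqrt δ)) (𝓝 0) (𝓝 0) := by
    have : Continuous (fun δ : ℝ => 5*K*δ + 2*(ε₁+K)*(δ*r + Real.sqrt δ)) := by
      continuity
    have h0 := this.tendsto 0
    simpa using h0
  have hcontA : Tendsto (fun δ : ℝ => 2*K*Real.sqrt δ + δ) (𝓝 0) (𝓝 0) := by
    have : Continuous (fun δ : ℝ => 2*K*Real.sqrt δ + δ) := by continuity
    have h0 := this.tendsto 0
    simpa using h0
  have hev1 : ∀ᶠ δ in 𝓝 (0:ℝ), 5*K*δ + 2*(ε₁+K)*(δ*r + Real.sqrt δ) < ρ^2/2 :=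
    hcont.eventually (eventually_lt_nhds (by positivity))
  have hev2 : ∀ᶠ δ in 𝓝 (0:ℝ), 2*K*Real.sqrt δ + δ < min δF (min ρ ε₀) :=
    hcontA.eventually (eventually_lt_nhds (by positivity))
  have hev3 : ∀ᶠ δ in 𝓝 (0:ℝ), δ < min 1 ε₀ :=
    eventually_lt_nhds (by positivity)
  obtain ⟨δ, ⟨⟨h1, h2⟩, h3⟩, (hδ : 0 < δ)⟩ :=
    (((hev1.and hev2).and hev3).filter_mono nhdsWithin_le_nhds).and
      (eventually_mem_nhdsWithin (s := Ioi (0:ℝ)))|>.exists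
  refine ⟨δ, hδ, fun x v hxM hvN hxd hvd => ?_⟩
  have hδ1 : δ ≤ 1 := (lt_min_iff.1 h3).1.le
  have hδε₀ : δ < ε₀ := (lt_min_iff.1 h3).2
  -- t
  set t : ℝ := min r⁻¹ (Real.sqrt δ) with htdef
  clear_value t
  have hsδ : 0 < Real.sqrt δ := Real.sqrt_pos.2 hδ
  have ht : 0 < t := htdef ▸ lt_min (inv_pos.2 hr) hsδ
  have htr : t ≤ r⁻¹ := htdef ▸ min_le_left _ _
  have hts : t ≤ Real.sqrt δ := htdef ▸ min_le_right _ _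
  have hδt : δ ≤ t * (δ*r + Real.sqrt δ) := by
    rcases min_cases r⁻¹ (Real.sqrt δ) with ⟨he, hle⟩ | ⟨he, hle⟩ <;> rw [htdef, he]
    · have h4 : r⁻¹ * r = 1 := inv_mul_cancel₀ hr.ne'
      nlinarith [Real.sqrt_nonneg δ, inv_pos.2 hr]
    · have h4 : Real.sqrt δ * Real.sqrt δ = δ := Real.mul_self_sqrt hδ.le
      nlinarith [Real.sqrt_nonneg δ, mul_pos hδ hr]
  -- norms of v
  have hvK : ‖v‖ ≤ K := by
    have h4 : ‖v‖ - ‖vb‖ ≤ ‖v - vb‖ := norm_sub_norm_le v vb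
    rw [← dist_eq_norm] at h4
    linarith [hvd, hδ1, hvbK]
  -- projection
  set z : H := x + t • v with hzdef
  clear_value z
  obtain ⟨w, hwQ, hwmin⟩ : ∃ w ∈ Q, ∀ y ∈ Q, dist z w ≤ dist z y := by
    obtain ⟨w, hw, hd⟩ := hQ.exists_infDist_eq_dist ⟨x, hMQ hxM⟩ z
    exact ⟨w, hw, fun y hy => hd ▸ Metric.infDist_le_dist_of_mem hy⟩
  have hzx : dist z x = t * ‖v‖ := by
    rw [hzdef, dist_eq_norm, add_sub_cancel_left, norm_smul, Real.norm_eq_abs, abs_of_pos ht]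
  have hzw : ‖z - w‖ ≤ t * ‖v‖ := by
    have := hwmin x (hMQ hxM)
    rw [dist_eq_norm] at this
    rw [hzx] at this; linarith
  set u : H := t⁻¹ • (z - w) with hudef
  clear_value u
  have huQ : u ∈ frechetNormalCone Q w := hudef ▸ nearest_smul_mem_frechet hwQ hwmin ht
  have huv : ‖u‖ ≤ ‖v‖ := by
    rw [hudef, norm_smul, Real.norm_eq_abs, abs_of_pos (inv_pos.2 ht)]
    calc t⁻¹ * ‖z - w‖ ≤ t⁻¹ * (t * ‖v‖) :=
          mul_le_mul_of_nonneg_left hzw (inv_pos.2 ht).le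
      _ = ‖v‖ := by field_simp
  have htu : t • u = z - w := by
    rw [hudef, smul_smul, mul_inv_cancel₀ ht.ne', one_smul]
  have hw_eq : w - xb = (x - xb) + t • (v - u) := by
    rw [smul_sub, htu, hzdef]; abel
  have hxxb : ‖x - xb‖ < δ := by rwa [← dist_eq_norm]
  have hvu : ‖v - u‖ ≤ 2 * K := by
    calc ‖v - u‖ ≤ ‖v‖ + ‖u‖ := norm_sub_le v u
      _ ≤ 2 * K := by linarith [huv.trans hvK]
  have hwxb : ‖w - xb‖ ≤ 2 * t * K + δ := by
    calc ‖w - xb‖ ≤ ‖x - xb‖ + ‖t • (v - u)‖ := by rw [hw_eq]; exact norm_add_le _ _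
      _ ≤ δ + t * (2 * K) := by
          rw [norm_smul, Real.norm_eq_abs, abs_of_pos ht]
          have := mul_le_mul_of_nonneg_left hvu ht.le
          linarith
      _ = 2 * t * K + δ := by ring
  have hwA : ‖w - xb‖ < min δF (min ρ ε₀) := by
    have htK : 2 * t * K ≤ 2 * K * Real.sqrt δ := by nlinarith
    linarith
  have hwδF : ‖w - xb‖ < δF := hwA.trans_le (min_le_left _ _)
  have hwρ : ‖w - xb‖ < ρ := hwA.trans_le ((min_le_right _ _).trans (min_le_left _ _))
  have hwε₀ : ‖w - xb‖ < ε₀ := hwA.trans_le ((min_le_right _ _).trans (min_le_right _ _))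
  -- Fréchet estimate at xb applied to w
  have hFw : ⟪vb, w - xb⟫ ≤ ε₁ * ‖w - xb‖ := hF w hwQ (by rwa [dist_eq_norm])
  -- inner product bound
  set C : ℝ := 2*K*ε₁ + (ε₁+K)*(δ*r + Real.sqrt δ) with hCdef
  clear_value C
  have hinn : ⟪vb, v - u⟫ ≤ C := by
    have e1 : ⟪vb, w - xb⟫ = ⟪vb, x - xb⟫ + t * ⟪vb, v - u⟫ := by
      rw [hw_eq, inner_add_right, real_inner_smul_right]
    have e2 : -⟪vb, x - xb⟫ ≤ K * δ := by
      have := abs_real_inner_le_norm vb (x - xb)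
      have h5 : ‖vb‖ * ‖x - xb‖ ≤ K * δ := by nlinarith [norm_nonneg vb]
      have := neg_abs_le (⟪vb, x - xb⟫ : ℝ)
      linarith [abs_real_inner_le_norm vb (x - xb)]
    have e3 : t * ⟪vb, v - u⟫ ≤ ε₁ * (2 * t * K + δ) + K * δ := by
      have h6 : ε₁ * ‖w - xb‖ ≤ ε₁ * (2 * t * K + δ) :=
        mul_le_mul_of_nonneg_left hwxb hε₁.le
      rw [e1] at hFw; linarith
    have e4 : t * ⟪vb, v - u⟫ ≤ t * C := by
      have h7 : (ε₁ + K) * δ ≤ (ε₁ + K) * (t * (δ*r + Real.sqrt δ)) :=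
        mul_le_mul_of_nonneg_left hδt (by positivity)
      rw [hCdef]
      nlinarith
    exact le_of_mul_le_mul_left (by linarith) ht
  -- ‖u - vb‖ < ρ
  have huvb : ‖u - vb‖ < ρ := by
    have e5 : ‖u - vb‖^2 = ‖u‖^2 - 2*⟪u, vb⟫ + ‖vb‖^2 := norm_sub_sq_real u vb
    have e6 : ⟪u, vb⟫ = ⟪vb, v⟫ - ⟪vb, v - u⟫ := by
      rw [real_inner_comm, ← inner_sub_right]
      congr 1
      abel
    have e7 : ‖vb‖^2 - K*δ ≤ ⟪vb, v⟫ := by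
      have : ⟪vb, v⟫ = ‖vb‖^2 + ⟪vb, v - vb⟫ := by
        rw [inner_sub_right, real_inner_self_eq_norm_sq]; ring
      have h8 := neg_abs_le (⟪vb, v - vb⟫ : ℝ)
      have h9 := abs_real_inner_le_norm vb (v - vb)
      have h10 : ‖v - vb‖ ≤ δ := by rw [← dist_eq_norm]; exact hvd.le
      nlinarith [norm_nonneg vb]
    have e8 : ‖u‖^2 ≤ ‖vb‖^2 + 3*K*δ := by
      have h11 : ‖u‖ ≤ ‖vb‖ + δ := by
        have h4 : ‖v‖ - ‖vb‖ ≤ ‖v - vb‖ := norm_sub_norm_le v vb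
        rw [← dist_eq_norm] at h4
        linarith [huv]
      nlinarith [norm_nonneg u, norm_nonneg vb]
    have e9 : ‖u - vb‖^2 < ρ^2 := by
      have hfin : ‖u - vb‖^2 ≤ 5*K*δ + 2*C := by nlinarith
      have hC2 : 2*C = 4*K*ε₁ + 2*(ε₁+K)*(δ*r + Real.sqrt δ) := by rw [hCdef]; ring
      have hKε₁ : 4*K*ε₁ = ρ^2/4 := by rw [hε₁def]; field_simp; ring
      linarith [h1, pow_pos hρ 2]
    nlinarith [norm_nonneg (u - vb), hρ]
  -- identifiability: w ∈ M
  have hball : (w, u) ∈ ball (xb, vb) ρ := by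
    rw [mem_ball, Prod.dist_eq]
    rw [dist_eq_norm, dist_eq_norm]
    exact max_lt hwρ huvb
  have hwM : w ∈ M := hWid (w, u) (hρW hball) hwQ (frechet_subset_limiting huQ)
  -- prox-regularity: w = x
  have huniq : IsUniqueNearestPt (M ∩ closedBall xb ε₀) (x + r⁻¹ • v) x :=
    hproxm x hxM v hvN (hxd.trans hδε₀) (hvd.trans hδε₀)
  have huniqt : IsUniqueNearestPt (M ∩ closedBall xb ε₀) z x :=
    hzdef ▸ uniqueNearest_segment hr huniq ht htr
  have hwx : w = x := by
    by_contra hne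
    have hmem : w ∈ M ∩ closedBall xb ε₀ :=
      ⟨hwM, mem_closedBall.2 (by rw [dist_eq_norm]; exact hwε₀.le)⟩
    have := huniqt.2 w hmem hne
    have h12 := hwmin x (hMQ hxM)
    linarith
  -- conclude
  have : u = v := by
    rw [hudef, hwx, hzdef, add_sub_cancel_left, smul_smul, inv_mul_cancel₀ ht.ne', one_smul]
  rw [← this, ← hwx]
  exact huQ


end AuxLemmas

/-- Reduction I: for a prox-regular subset `M ⊆ Q`, identifiability is
equivalent to the local coincidence of the normal cone graphs. -/
theorem statement10 {n : ℕ} (Q : Set (Euc n)) (hQ : IsClosed Q)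
    (M : Set (Euc n)) (hMQ : M ⊆ Q) (xb vb : Euc n)
    (hvb : vb ∈ frechetNormalCone Q xb) (hprox : ProxRegularAt M xb vb) :
    IdentifiableIn Q M xb vb ↔
      LocallyEq (svGraph (limitingNormalCone Q)) (svGraph (limitingNormalCone M))
        (xb, vb) := by
  obtain ⟨η, hη, hcl⟩ := mem_of_locallyClosed hprox.1
  constructor
  · intro hid
    obtain ⟨U₁, hU₁n, hU₁⟩ := identifiable_gph_incl hMQ hid
    obtain ⟨δ, hδ, hB2⟩ := key_B2 hQ hMQ hvb hprox hid
    refine ⟨U₁ ∩ (ball xb (min δ η) ×ˢ ball vb δ),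
      inter_mem hU₁n (prod_mem_nhds (ball_mem_nhds _ (lt_min hδ hη)) (ball_mem_nhds _ hδ)), ?_⟩
    ext ⟨x, v⟩
    simp only [Set.mem_inter_iff, Set.mem_prod, mem_ball]
    constructor
    · rintro ⟨hg, hu⟩
      exact ⟨hU₁ x v hu.1 hg, hu⟩
    · rintro ⟨hg, hu⟩
      have hgM : v ∈ limitingNormalCone M x := hg
      have hxM : x ∈ M := hcl x (lt_of_lt_of_le hu.2.1 (min_le_right _ _)) ⟨v, hgM⟩
      exact ⟨frechet_subset_limiting
        (hB2 x v hxM hgM (lt_of_lt_of_le hu.2.1 (min_le_left _ _)) hu.2.2), hu⟩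
  · intro h
    obtain ⟨U, hUn, hUeq⟩ := h
    refine ⟨U ∩ (ball xb η ×ˢ (univ : Set (Euc n))),
      inter_mem hUn (prod_mem_nhds (ball_mem_nhds _ hη) univ_mem), ?_⟩
    rintro ⟨x, v⟩ ⟨hU, hb, -⟩ hxQ hvQ
    have h2 : (x, v) ∈ svGraph (limitingNormalCone M) ∩ U := by
      rw [← hUeq]; exact ⟨hvQ, hU⟩
    exact hcl x (mem_ball.1 hb) ⟨v, h2.1⟩
end
end

section
/- (Accessibility) Let Q ⊂ ℝⁿ be a closed set and M ⊂ Q a subset containing a point x̄. Suppose that for some Fréchet normal v̄ ∈ N̂_Q(x̄) there exists a sequence of vectors yᵢ ∈ N^P_M(x̄) \ N^P_Q(x̄) with yᵢ → v̄. Then there exists a sequence (xᵢ, vᵢ) with vᵢ ∈ N^P_Q(xᵢ), (xᵢ, vᵢ) → (x̄, v̄), and xᵢ ∉ M for every index i. -/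
open Filter Topology Metric Set
open scoped RealInnerProductSpace

noncomputable section

/-!
Shrinking the proximal radius of `yᵢ` keeps `xb` a nearest point of `M` to
`pᵢ = xb + tᵢ yᵢ` for any `tᵢ → 0`. Let `xᵢ` be a nearest point of `Q` to `pᵢ`. As `yᵢ` is not
a proximal normal to `Q`, `xb` is not nearest in `Q`, so `xᵢ` is strictly closer to `pᵢ` than
every point of `M`, whence `xᵢ ∉ M`; and `vᵢ = (pᵢ - xᵢ)/tᵢ` is a proximal normal to `Q` at `xᵢ`.
Projection gives `‖xᵢ - xb‖² ≤ 2 tᵢ ⟪yᵢ, xᵢ - xb⟫`, which Fréchet normality of `vb` makes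
`o(tᵢ ‖xᵢ - xb‖)`; so `(xᵢ - xb)/tᵢ → 0` and `vᵢ = yᵢ - (xᵢ - xb)/tᵢ → vb`.
-/

section ProximalNormals

variable {H : Type*} [NormedAddCommGroup H]

theorem mem_nearestPts_of_subset {M Q : Set H} {p x z : H} (hMQ : M ⊆ Q)
    (hx : x ∈ nearestPts M p) (hz : z ∈ nearestPts Q p) (hzM : z ∈ M) :
    x ∈ nearestPts Q p :=
  ⟨hMQ hx.1, fun y hy => (hx.2 z hzM).trans (hz.2 y hy)⟩

theorem exists_mem_nearestPts [ProperSpace H] {S : Set H} (hS : IsClosed S)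
    (hne : S.Nonempty) (p : H) : ∃ z, z ∈ nearestPts S p := by
  obtain ⟨z, hz, hd⟩ := hS.exists_infDist_eq_dist hne p
  exact ⟨z, hz, fun y hy => hd ▸ infDist_le_dist_of_mem hy⟩

theorem mem_nearestPts_add_smul_of_le [NormedSpace ℝ H] {S : Set H} {x v : H} {s t : ℝ}
    (hx : x ∈ nearestPts S (x + s • v)) (ht : 0 ≤ t) (hts : t ≤ s) :
    x ∈ nearestPts S (x + t • v) := by
  refine ⟨hx.1, fun y hy => ?_⟩
  have hdist : ∀ a : ℝ, 0 ≤ a → dist (x + a • v) x = a * ‖v‖ := fun a ha => by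
    rw [dist_eq_norm, add_sub_cancel_left, norm_smul, Real.norm_of_nonneg ha]
  have hst : dist (x + s • v) (x + t • v) = (s - t) * ‖v‖ := by
    rw [dist_add_left, dist_eq_norm, ← sub_smul, norm_smul,
      Real.norm_of_nonneg (sub_nonneg.2 hts)]
  have hy' := hx.2 y hy
  have htri := dist_triangle (x + s • v) (x + t • v) y
  rw [hdist s (ht.trans hts)] at hy'
  rw [hdist t ht]
  nlinarith

variable [InnerProductSpace ℝ H]

theorem mem_proxNormalCone_iff {S : Set H} {x v : H} :
    v ∈ proxNormalCone S x ↔ ∃ t > (0:ℝ), x ∈ nearestPts S (x + t • v) := by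
  constructor
  · rintro ⟨hx, r, hr, hnear⟩
    exact ⟨r⁻¹, inv_pos.2 hr, hx, hnear⟩
  · rintro ⟨t, ht, hx, hnear⟩
    exact ⟨hx, t⁻¹, inv_pos.2 ht, by rwa [inv_inv]⟩

theorem inv_smul_sub_mem_proxNormalCone {S : Set H} {p z : H} (hz : z ∈ nearestPts S p)
    {t : ℝ} (ht : 0 < t) : t⁻¹ • (p - z) ∈ proxNormalCone S z := by
  refine mem_proxNormalCone_iff.2 ⟨t, ht, ?_⟩
  rwa [smul_inv_smul₀ ht.ne', add_sub_cancel]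

theorem norm_sub_sq_le_of_mem_nearestPts {S : Set H} {x y z : H} {t : ℝ} (hx : x ∈ S)
    (hz : z ∈ nearestPts S (x + t • y)) : ‖z - x‖ ^ 2 ≤ 2 * t * ⟪y, z - x⟫ := by
  have hle : ‖t • y - (z - x)‖ ≤ ‖t • y‖ := by
    simpa [dist_eq_norm, sub_sub_eq_add_sub, add_comm] using hz.2 x hx
  have hexp := norm_sub_sq_real (t • y) (z - x)
  rw [real_inner_smul_left] at hexp
  nlinarith [pow_le_pow_left₀ (norm_nonneg _) hle 2]

theorem norm_sub_le_of_mem_nearestPts {S : Set H} {x y z : H} {t : ℝ} (hx : x ∈ S)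
    (hz : z ∈ nearestPts S (x + t • y)) (ht : 0 ≤ t) : ‖z - x‖ ≤ 2 * t * ‖y‖ := by
  have hsq := norm_sub_sq_le_of_mem_nearestPts hx hz
  have hcs := real_inner_le_norm y (z - x)
  rcases (norm_nonneg (z - x)).eq_or_lt with h0 | hpos
  · rw [← h0]; positivity
  · nlinarith

theorem norm_le_of_sq_le_inner {v w y : H} {t ε : ℝ} (hsq : ‖w‖ ^ 2 ≤ 2 * t * ⟪y, w⟫)
    (hv : ⟪v, w⟫ ≤ ε * ‖w‖) (hy : ‖y - v‖ ≤ ε) (ht : 0 ≤ t) : ‖w‖ ≤ 4 * ε * t := by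
  have hε : 0 ≤ ε := (norm_nonneg _).trans hy
  have hyw : ⟪y, w⟫ ≤ 2 * ε * ‖w‖ := by
    have hcs := real_inner_le_norm (y - v) w
    rw [inner_sub_left] at hcs
    nlinarith [norm_nonneg w]
  rcases (norm_nonneg w).eq_or_lt with h0 | hpos
  · rw [← h0]; positivity
  · nlinarith

theorem tendsto_inv_smul_sub_of_mem_frechetNormalCone {Q : Set H} {xb vb : H}
    (hvb : vb ∈ frechetNormalCone Q xb) {xs ys : ℕ → H} {t : ℕ → ℝ}
    (hxsQ : ∀ i, xs i ∈ Q) (ht : ∀ i, 0 < t i)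
    (hsq : ∀ i, ‖xs i - xb‖ ^ 2 ≤ 2 * t i * ⟪ys i, xs i - xb⟫)
    (hxs : Tendsto xs atTop (𝓝 xb)) (hys : Tendsto ys atTop (𝓝 vb)) :
    Tendsto (fun i => (t i)⁻¹ • (xs i - xb)) atTop (𝓝 0) := by
  rw [Metric.tendsto_nhds]
  intro ε hε
  obtain ⟨δ, hδ, hfre⟩ := hvb.2 (ε / 8) (by positivity)
  filter_upwards [Metric.tendsto_nhds.mp hxs δ hδ, Metric.tendsto_nhds.mp hys (ε / 8)
    (by positivity)] with i hxi hyi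
  have hle := norm_le_of_sq_le_inner (hsq i) (hfre _ (hxsQ i) hxi)
    (by rw [← dist_eq_norm]; exact hyi.le) (ht i).le
  rw [dist_zero_right, norm_smul, Real.norm_of_nonneg (inv_pos.2 (ht i)).le,
    inv_mul_lt_iff₀ (ht i)]
  nlinarith [ht i]

theorem tendsto_of_mem_nearestPts_add_smul {Q : Set H} {xb vb : H}
    (hvb : vb ∈ frechetNormalCone Q xb) {xs ys : ℕ → H} {t : ℕ → ℝ}
    (hxs : ∀ i, xs i ∈ nearestPts Q (xb + t i • ys i)) (ht : ∀ i, 0 < t i)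
    (ht0 : Tendsto t atTop (𝓝 0)) (hys : Tendsto ys atTop (𝓝 vb)) :
    Tendsto xs atTop (𝓝 xb) ∧
      Tendsto (fun i => (t i)⁻¹ • (xb + t i • ys i - xs i)) atTop (𝓝 vb) := by
  have hxst : Tendsto xs atTop (𝓝 xb) := by
    rw [tendsto_iff_norm_sub_tendsto_zero]
    refine squeeze_zero (fun _ => norm_nonneg _)
      (fun i => norm_sub_le_of_mem_nearestPts hvb.1 (hxs i) (ht i).le) ?_
    simpa using (ht0.const_mul 2).mul hys.norm
  refine ⟨hxst, ?_⟩
  have hstep := tendsto_inv_smul_sub_of_mem_frechetNormalCone hvb (fun i => (hxs i).1) ht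
    (fun i => norm_sub_sq_le_of_mem_nearestPts hvb.1 (hxs i)) hxst hys
  have hvs : ∀ i, (t i)⁻¹ • (xb + t i • ys i - xs i) = ys i - (t i)⁻¹ • (xs i - xb) := by
    intro i
    rw [show xb + t i • ys i - xs i = t i • ys i - (xs i - xb) by abel, smul_sub,
      inv_smul_smul₀ (ht i).ne']
  simpa [hvs] using hys.sub hstep

end ProximalNormals

/-- Accessibility. -/
theorem statement11 {n : ℕ} (Q : Set (Euc n)) (hQ : IsClosed Q)
    (M : Set (Euc n)) (hMQ : M ⊆ Q) (xb : Euc n) (hxb : xb ∈ M)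
    (vb : Euc n) (hvb : vb ∈ frechetNormalCone Q xb)
    (ys : ℕ → Euc n) (hys : ∀ i, ys i ∈ proxNormalCone M xb \ proxNormalCone Q xb)
    (hlim : Tendsto ys atTop (𝓝 vb)) :
    ∃ xs vs : ℕ → Euc n, (∀ i, vs i ∈ proxNormalCone Q (xs i)) ∧ (∀ i, xs i ∉ M) ∧
      Tendsto xs atTop (𝓝 xb) ∧ Tendsto vs atTop (𝓝 vb) := by
  choose s hs hsM using fun i => mem_proxNormalCone_iff.1 (hys i).1
  set t : ℕ → ℝ := fun i => min (s i) (1 / (i + 1))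
  have ht : ∀ i, 0 < t i := fun i => lt_min (hs i) Nat.one_div_pos_of_nat
  have ht0 : Tendsto t atTop (𝓝 0) :=
    squeeze_zero (fun i => (ht i).le) (fun i => min_le_right _ _)
      tendsto_one_div_add_atTop_nhds_zero_nat
  choose xs hxs using fun i => exists_mem_nearestPts hQ ⟨xb, hMQ hxb⟩ (xb + t i • ys i)
  refine ⟨xs, fun i => (t i)⁻¹ • (xb + t i • ys i - xs i),
    fun i => inv_smul_sub_mem_proxNormalCone (hxs i) (ht i), fun i hxsM => ?_,
    tendsto_of_mem_nearestPts_add_smul hvb hxs ht ht0 hlim⟩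
  have hxbM := mem_nearestPts_add_smul_of_le (hsM i) (ht i).le (min_le_left _ _)
  exact (hys i).2 (mem_proxNormalCone_iff.2
    ⟨t i, ht i, mem_nearestPts_of_subset hMQ hxbM (hxs i) hxsM⟩)
end
end
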